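/- Let (R, m) be a Noetherian local ring with injective hull E of the residue field R/m, and let f : M → N be an R-module map where M is a finitely generated free R-module. Then f is pure if and only if the induced map f ⊗ id_E : M ⊗_R E → N ⊗_R E is injective. -/

import Mathlib

/-!
An injective module `E` containing the residue field `R ⧸ m` of a local ring is a cogenerator:
a nonzero `x` spans `R ⧸ ann x`, which maps onto `R ⧸ m ⊆ E` because `ann x ⊆ m`, and this map
extends to the whole module by injectivity. For `M` free, `M ⊗ K` is a direct sum of copies of
`K`, so the maps `M ⊗ φ` for `φ : K → E` jointly detect zero. If `x ∈ M ⊗ K` is killed by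
`f ⊗ K`, naturality gives `(f ⊗ E) (M ⊗ φ) x = (N ⊗ φ) (f ⊗ K) x = 0`, hence every
`(M ⊗ φ) x` vanishes and `x = 0`.
-/

universe u

open TensorProduct

/-- A linear map `f : M → N` is *pure* if it remains injective after tensoring with every
`R`-module. -/
def LinearMap.IsPure {R : Type u} [CommRing R] {M N : Type u}
    [AddCommGroup M] [AddCommGroup N] [Module R M] [Module R N] (f : M →ₗ[R] N) : Prop :=
  ∀ (K : Type u) [AddCommGroup K] [Module R K], Function.Injective (LinearMap.rTensor K f)

theorem Module.Injective.exists_apply_ne_zero_of_residueField {R : Type u} [CommRing R]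
    [IsLocalRing R] {E : Type u} [AddCommGroup E] [Module R E] (hE : Module.Injective R E)
    {i : IsLocalRing.ResidueField R →ₗ[R] E} (hi : Function.Injective i)
    {K : Type u} [AddCommGroup K] [Module R K] {k : K} (hk : k ≠ 0) :
    ∃ φ : K →ₗ[R] E, φ k ≠ 0 := by
  have htors : Ideal.torsionOf R K k ≤ IsLocalRing.maximalIdeal R :=
    IsLocalRing.le_maximalIdeal ((Ideal.torsionOf_eq_top_iff R k).not.mpr hk)
  obtain ⟨φ, hφ⟩ := hE.out
    ((R ∙ k).subtype ∘ₗ (Ideal.quotTorsionOfEquivSpanSingleton R K k).toLinearMap)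
    (Subtype.val_injective.comp (LinearEquiv.injective _)) (i ∘ₗ Submodule.factor htors)
  have hφk : φ k = i 1 := by
    have h1 := hφ (Submodule.Quotient.mk 1)
    simp only [LinearMap.comp_apply, LinearEquiv.coe_coe,
      Ideal.quotTorsionOfEquivSpanSingleton_apply_mk, one_smul, Submodule.subtype_apply] at h1
    exact h1
  exact ⟨φ, hφk ▸ (hi.ne_iff' (map_zero i)).mpr one_ne_zero⟩

section Tensor

variable {R : Type*} [CommRing R] {M N K E : Type*}
  [AddCommGroup M] [AddCommGroup N] [AddCommGroup K] [AddCommGroup E]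
  [Module R M] [Module R N] [Module R K] [Module R E]

theorem TensorProduct.equivFinsuppOfBasisLeft_lTensor_apply {ι : Type*} [DecidableEq ι]
    (b : Module.Basis ι R M) (φ : K →ₗ[R] E) (x : M ⊗[R] K) (j : ι) :
    equivFinsuppOfBasisLeft b (φ.lTensor M x) j = φ (equivFinsuppOfBasisLeft b x j) := by
  induction x with
  | zero => simp
  | tmul m k => simp
  | add x y hx hy => simp [hx, hy]

theorem TensorProduct.eq_zero_of_forall_lTensor_apply_eq_zero [Module.Free R M]
    (hE : ∀ k : K, k ≠ 0 → ∃ φ : K →ₗ[R] E, φ k ≠ 0) {x : M ⊗[R] K}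
    (hx : ∀ φ : K →ₗ[R] E, φ.lTensor M x = 0) : x = 0 := by
  classical
  let b := Module.Free.chooseBasis R M
  by_contra hx0
  obtain ⟨j, hj⟩ : ∃ j, equivFinsuppOfBasisLeft b x j ≠ 0 :=
    Finsupp.ne_iff.mp ((LinearEquiv.map_ne_zero_iff _).mpr hx0)
  obtain ⟨φ, hφ⟩ := hE _ hj
  apply hφ
  rw [← equivFinsuppOfBasisLeft_lTensor_apply, hx φ, map_zero, Finsupp.zero_apply]

theorem LinearMap.rTensor_injective_of_rTensor_injective_of_separating [Module.Free R M]
    (hE : ∀ k : K, k ≠ 0 → ∃ φ : K →ₗ[R] E, φ k ≠ 0) {f : M →ₗ[R] N}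
    (hf : Function.Injective (f.rTensor E)) : Function.Injective (f.rTensor K) := by
  refine (injective_iff_map_eq_zero _).mpr fun x hx ↦ eq_zero_of_forall_lTensor_apply_eq_zero hE
    fun φ ↦ hf ?_
  rw [map_zero, ← LinearMap.comp_apply, LinearMap.rTensor_comp_lTensor,
    ← LinearMap.lTensor_comp_rTensor, LinearMap.comp_apply, hx, map_zero]

end Tensor

theorem isPure_iff_injective_after_tensoring_injective_hull_general
    {R : Type u} [CommRing R] [IsLocalRing R]
    {E : Type u} [AddCommGroup E] [Module R E]
    (hE_inj : Module.Injective R E)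
    (i : IsLocalRing.ResidueField R →ₗ[R] E) (hi : Function.Injective i)
    {M N : Type u} [AddCommGroup M] [AddCommGroup N] [Module R M] [Module R N]
    [Module.Free R M] (f : M →ₗ[R] N) :
    f.IsPure ↔ Function.Injective (LinearMap.rTensor E f) :=
  ⟨fun hpure ↦ hpure E, fun hf _ _ _ ↦ f.rTensor_injective_of_rTensor_injective_of_separating
    (fun _ hk ↦ hE_inj.exists_apply_ne_zero_of_residueField hi hk) hf⟩

/-- **Hochster–Huneke purity criterion.** Let `(R, m)` be a Noetherian local
ring, `E` an injective hull of the residue field `R/m` (i.e. an injective module together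
with an essential embedding of the residue field), and `f : M → N` an `R`-module map with
`M` finitely generated and free.  Then `f` is pure iff `f ⊗ id_E` is injective. -/
theorem isPure_iff_injective_after_tensoring_injective_hull
    {R : Type u} [CommRing R] [IsNoetherianRing R] [IsLocalRing R]
    {E : Type u} [AddCommGroup E] [Module R E]
    (hE_inj : Module.Injective R E)
    (i : IsLocalRing.ResidueField R →ₗ[R] E) (hi : Function.Injective i)
    (hE_ess : ∀ N : Submodule R E, N ≠ ⊥ → N ⊓ LinearMap.range i ≠ ⊥)
    {M N : Type u} [AddCommGroup M] [AddCommGroup N] [Module R M] [Module R N]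
    [Module.Finite R M] [Module.Free R M] (f : M →ₗ[R] N) :
    f.IsPure ↔ Function.Injective (LinearMap.rTensor E f) :=
  isPure_iff_injective_after_tensoring_injective_hull_general hE_inj i hi f
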